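/- arXiv:1604.05021 — 9 statements merged into one kernel-verified Lean document; each statement's English description precedes it below -/
import Mathlib

section
/- For every positive integer p, ⌊φ(p + ⌊φp⌋ + 1)⌋ = p, where φ = (√5 − 1)/2. -/
noncomputable def phi : ℝ := (Real.sqrt 5 - 1) / 2

/-! Since `φ² = 1 - φ`, for every real `x` we have
`φ (x + ⌊φx⌋ + 1) = x + φ (⌊φx⌋ + 1 - φx)`, and the correction term lies in `(0, φ] ⊆ (0, 1)`.
So `φ (x + ⌊φx⌋ + 1)` lies strictly between `x` and `x + 1`, and its floor is `x` whenever `x` is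
an integer. -/

lemma phi_sq : phi ^ 2 = 1 - phi := by
  have h5 : Real.sqrt 5 ^ 2 = 5 := Real.sq_sqrt (by norm_num)
  unfold phi
  linear_combination h5 / 4

lemma phi_pos : 0 < phi := by
  have : 1 < Real.sqrt 5 := by
    rw [Real.lt_sqrt zero_le_one]
    norm_num
  unfold phi
  linarith

lemma phi_lt_one : phi < 1 := by
  nlinarith [phi_sq, phi_pos]

lemma phi_mul_add_floor_add_one (x : ℝ) :
    phi * (x + ⌊phi * x⌋ + 1) = x + phi * (⌊phi * x⌋ + 1 - phi * x) := by
  linear_combination x * phi_sq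

lemma floor_phi_mul_add_floor_add_one (n : ℤ) :
    ⌊phi * ((n : ℝ) + (⌊phi * (n : ℝ)⌋ : ℝ) + 1)⌋ = n := by
  have h_le : (⌊phi * (n : ℝ)⌋ : ℝ) ≤ phi * n := Int.floor_le _
  have h_lt : phi * n < (⌊phi * (n : ℝ)⌋ : ℝ) + 1 := Int.lt_floor_add_one _
  rw [Int.floor_eq_iff, phi_mul_add_floor_add_one]
  constructor
  · nlinarith [phi_pos]
  · nlinarith [phi_pos, phi_lt_one]

theorem floor_phi_eq₁_general (p : ℕ) :
    ⌊phi * ((p : ℝ) + (⌊phi * (p : ℝ)⌋ : ℝ) + 1)⌋ = (p : ℤ) := by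
  exact_mod_cast floor_phi_mul_add_floor_add_one p

/-- For every positive integer `p`, `⌊φ(p + ⌊φp⌋ + 1)⌋ = p`. -/
theorem floor_phi_eq₁ (p : ℕ) (hp : 1 ≤ p) :
    ⌊phi * ((p : ℝ) + (⌊phi * (p : ℝ)⌋ : ℝ) + 1)⌋ = (p : ℤ) :=
  floor_phi_eq₁_general p
end

section
/- For every positive integer p, ⌊φ(2p + ⌊φp⌋ + 1)⌋ = p + ⌊φp⌋, where φ = (√5 − 1)/2. -/
/-!
Write `φ n = ⌊φ n⌋ + f` with `0 ≤ f < 1`. Since `φ² = 1 - φ`, the product `φ ⌊φ n⌋ = φ² n - φ f`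
collapses and `φ (2n + ⌊φ n⌋ + 1) = n + ⌊φ n⌋ + (φ + (1 - φ) f)`, where the last summand is a
convex combination of `φ` and `1`, hence lies in `[φ, 1)`.
-/

lemma phi_sq_add_phi : phi ^ 2 + phi = 1 := by
  have h5 : Real.sqrt 5 ^ 2 = 5 := Real.sq_sqrt (by norm_num)
  unfold phi
  linear_combination h5 / 4

lemma phi_mul_two_mul_add_floor_add_one (x : ℝ) :
    phi * (2 * x + ⌊phi * x⌋ + 1) = x + ⌊phi * x⌋ + (phi + (1 - phi) * Int.fract (phi * x)) := by
  rw [Int.fract]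
  linear_combination x * phi_sq_add_phi

lemma phi_add_one_sub_phi_mul_mem_Ico {f : ℝ} (hf : f ∈ Set.Ico 0 1) :
    phi + (1 - phi) * f ∈ Set.Ico 0 1 := by
  have h1 : 0 < 1 - phi := sub_pos.2 phi_lt_one
  constructor <;> nlinarith [hf.1, hf.2, phi_pos]

lemma floor_phi_mul_two_mul_add_floor_add_one (n : ℤ) :
    ⌊phi * (2 * n + ⌊phi * n⌋ + 1)⌋ = n + ⌊phi * n⌋ := by
  have hfract : Int.fract (phi * n) ∈ Set.Ico 0 1 := ⟨Int.fract_nonneg _, Int.fract_lt_one _⟩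
  rw [phi_mul_two_mul_add_floor_add_one, ← Int.cast_add, Int.floor_intCast_add,
    Int.floor_eq_zero_iff.2 (phi_add_one_sub_phi_mul_mem_Ico hfract), add_zero]

theorem floor_phi_eq₂_general (p : ℕ) :
    ⌊phi * (2 * (p : ℝ) + (⌊phi * (p : ℝ)⌋ : ℝ) + 1)⌋ = (p : ℤ) + ⌊phi * (p : ℝ)⌋ := by
  exact_mod_cast floor_phi_mul_two_mul_add_floor_add_one p

/-- For every positive integer `p`, `⌊φ(2p + ⌊φp⌋ + 1)⌋ = p + ⌊φp⌋`. -/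
theorem floor_phi_eq₂ (p : ℕ) (hp : 1 ≤ p) :
    ⌊phi * (2 * (p : ℝ) + (⌊phi * (p : ℝ)⌋ : ℝ) + 1)⌋ = (p : ℤ) + ⌊phi * (p : ℝ)⌋ :=
  floor_phi_eq₂_general p
end

section
/- For every positive integer p, ⌊φ(p + ⌊φp⌋)⌋ = p − 1, where φ = (√5 − 1)/2. -/
lemma phi_eq_neg_goldenConj : phi = -Real.goldenConj := by
  unfold phi Real.goldenConj
  ring

lemma irrational_phi : Irrational phi := by
  simpa [phi_eq_neg_goldenConj] using Real.goldenConj_irrational.neg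

lemma floor_phi_mul_natCast_lt {p : ℕ} (hp : p ≠ 0) : (⌊phi * p⌋ : ℝ) < phi * p :=
  (Int.floor_le _).lt_of_ne fun h ↦ (irrational_phi.mul_natCast hp).ne_int _ h.symm

lemma phi_mul_add_floor_lt {t : ℝ} (ht : (⌊phi * t⌋ : ℝ) < phi * t) :
    phi * (t + ⌊phi * t⌋) < t :=
  calc phi * (t + ⌊phi * t⌋) < phi * (t + phi * t) := by gcongr; exact phi_pos
    _ = t := by linear_combination t * phi_sq

lemma sub_phi_lt_phi_mul_add_floor (t : ℝ) : t - phi < phi * (t + ⌊phi * t⌋) :=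
  calc t - phi = phi * (t + (phi * t - 1)) := by linear_combination -t * phi_sq
    _ < phi * (t + ⌊phi * t⌋) := by
      have := Int.sub_one_lt_floor (phi * t)
      gcongr
      exact phi_pos

/-- For every positive integer `p`, `⌊φ(p + ⌊φp⌋)⌋ = p - 1`. -/
theorem floor_phi_eq₃ (p : ℕ) (hp : 1 ≤ p) :
    ⌊phi * ((p : ℝ) + (⌊phi * (p : ℝ)⌋ : ℝ))⌋ = (p : ℤ) - 1 := by
  rw [Int.floor_eq_iff]
  push_cast
  constructor
  · linarith [sub_phi_lt_phi_mul_add_floor (p : ℝ), phi_lt_one]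
  · linarith [phi_mul_add_floor_lt (floor_phi_mul_natCast_lt (by omega : p ≠ 0))]
end

section
/- If A is the sequence satisfying A(f_m − 2) = ∑_{n=1}^{m−1} C(n) where C(n) = ((n+1)/5) f_{n+1} + ((n−2)/5) f_{n−1}, then A(f_m − 2) = ((m−3)/5) f_{m+2} + ((m−1)/5) f_m + 2 for all m ≥ 2. -/
/-- Fibonacci numbers shifted: `fibF (m+2) = f_m` where `f_{-2}=0`, `f_{-1}=1`,
`f_m = f_{m-1} + f_{m-2}`. -/
def fibF : ℕ → ℕ
  | 0 => 0
  | 1 => 1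
  | n + 2 => fibF (n + 1) + fibF n

/-!
Writing `S m` for the right-hand side, a direct computation with the Fibonacci recurrence
gives `S (n + 1) - S n = C n` and `S 0 = 0`, so the sum telescopes. The summand `C 0`
vanishes, so the sum may start at `n = 0`.
-/

open Finset Nat

theorem fibF_eq_fib (n : ℕ) : fibF n = fib n := by
  induction n using fibF.induct with
  | case1 => rfl
  | case2 => rfl
  | case3 n ih₁ ih₀ => rw [fibF, fib_add_two, ih₁, ih₀, add_comm]

def fibSummand (n : ℕ) : ℚ :=
  ((n + 1) / 5) * fib (n + 3) + ((n - 2) / 5) * fib (n + 1)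

def fibSummandSum (m : ℕ) : ℚ :=
  ((m - 3) / 5) * fib (m + 4) + ((m - 1) / 5) * fib (m + 2) + 2

theorem fibSummandSum_zero : fibSummandSum 0 = 0 := by
  norm_num [fibSummandSum, fib_add_two]

theorem fibSummand_zero : fibSummand 0 = 0 := by
  norm_num [fibSummand, fib_add_two]

theorem fibSummandSum_succ_sub (n : ℕ) :
    fibSummandSum (n + 1) - fibSummandSum n = fibSummand n := by
  simp only [fibSummandSum, fibSummand, fib_add_two, Nat.cast_add, Nat.cast_succ]
  ring

theorem sum_range_fibSummand (m : ℕ) : ∑ n ∈ range m, fibSummand n = fibSummandSum m := by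
  simp only [← fibSummandSum_succ_sub, sum_range_sub, fibSummandSum_zero, sub_zero]

theorem sum_Icc_fibSummand (m : ℕ) : ∑ n ∈ Icc 1 (m - 1), fibSummand n = fibSummandSum m := by
  rw [← sum_range_fibSummand]
  cases m with
  | zero => rfl
  | succ m =>
    rw [sum_range_succ', fibSummand_zero, add_zero, range_eq_Ico, sum_Ico_add', zero_add,
      Ico_add_one_right_eq_Icc, Nat.add_sub_cancel]

theorem sum_C_closed_form_general (m : ℕ) :
    (∑ n ∈ Finset.Icc 1 (m - 1),
        ((((n : ℚ) + 1) / 5) * (fibF (n + 3) : ℚ) +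
          (((n : ℚ) - 2) / 5) * (fibF (n + 1) : ℚ))) =
      (((m : ℚ) - 3) / 5) * (fibF (m + 4) : ℚ) +
        (((m : ℚ) - 1) / 5) * (fibF (m + 2) : ℚ) + 2 := by
  simpa only [fibSummand, fibSummandSum, fibF_eq_fib] using sum_Icc_fibSummand m

/-- For `m ≥ 2`,
`∑_{n=1}^{m-1} [((n+1)/5) f_{n+1} + ((n-2)/5) f_{n-1}] = ((m-3)/5) f_{m+2} + ((m-1)/5) f_m + 2`
(with `f_i = fibF (i+2)`). -/
theorem sum_C_closed_form (m : ℕ) (hm : 2 ≤ m) :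
    (∑ n ∈ Finset.Icc 1 (m - 1),
        ((((n : ℚ) + 1) / 5) * (fibF (n + 3) : ℚ) +
          (((n : ℚ) - 2) / 5) * (fibF (n + 1) : ℚ))) =
      (((m : ℚ) - 3) / 5) * (fibF (m + 4) : ℚ) +
        (((m : ℚ) - 1) / 5) * (fibF (m + 2) : ℚ) + 2 :=
  sum_C_closed_form_general m
end

section
/- A prefix F[1,n] of the Fibonacci word is a palindrome if and only if n = f_m − 2 for some m ≥ 2, where f denotes Fibonacci numbers with f_{−2}=0, f_{−1}=1 (so f_2 = 5, f_3 = 8, ...). -/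
/-- The Fibonacci substitution `σ(a) = ab`, `σ(b) = a`, with `a = 0`, `b = 1`. -/
def fibSub : Fin 2 → List (Fin 2) := fun x => if x = 0 then [0, 1] else [0]

def fibList : ℕ → List (Fin 2)
  | 0 => [0]
  | n + 1 => (fibList n).flatMap fibSub

/-- The Fibonacci word, 0-indexed: `fibWord i` is the `(i+1)`-st letter. -/
def fibWord (i : ℕ) : Fin 2 := (fibList (i + 1)).getD i 0

def fibPrefix (n : ℕ) : List (Fin 2) := (List.range n).map fibWord

theorem reverse_flatMap_append_of_conj {α β : Type*} (f : α → List β) (c : β)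
    (hf : ∀ x, f x ++ [c] = c :: (f x).reverse) (p : List α) :
    (p.flatMap f ++ [c]).reverse = p.reverse.flatMap f ++ [c] := by
  induction p with
  | nil => rfl
  | cons x t ih =>
    rw [List.flatMap_cons, List.append_assoc, List.reverse_append, ih, List.reverse_cons,
      List.flatMap_append, List.flatMap_singleton, List.append_assoc, List.append_assoc, hf,
      List.singleton_append]

theorem palindrome_flatMap_append_iff {α β : Type*} {f : α → List β} {c : β}
    (hf : ∀ x, f x ++ [c] = c :: (f x).reverse) (hinj : Function.Injective (List.flatMap f))
    (p : List α) : (p.flatMap f ++ [c]).Palindrome ↔ p.Palindrome := by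
  rw [List.Palindrome.iff_reverse_eq, List.Palindrome.iff_reverse_eq,
    reverse_flatMap_append_of_conj f c hf, List.append_left_inj, hinj.eq_iff]

theorem length_fibSub_pos (x : Fin 2) : 0 < (fibSub x).length := by
  fin_cases x <;> decide

theorem getElem_fibSub_zero (x : Fin 2) : (fibSub x)[0]'(length_fibSub_pos x) = 0 := by
  fin_cases x <;> rfl

def fibSubDecode : List (Fin 2) → List (Fin 2)
  | 0 :: 1 :: t => 0 :: fibSubDecode t
  | _ :: t => 1 :: fibSubDecode t
  | [] => []

theorem fibSubDecode_flatMap (l : List (Fin 2)) : fibSubDecode (l.flatMap fibSub) = l := by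
  induction l with
  | nil => rfl
  | cons x t ih =>
    fin_cases x
    · simpa [fibSub, fibSubDecode] using ih
    · cases t with
      | nil => rfl
      | cons y t =>
        fin_cases y <;> simp_all [fibSub, fibSubDecode]

theorem flatMap_fibSub_injective : Function.Injective (List.flatMap fibSub) :=
  Function.LeftInverse.injective fibSubDecode_flatMap

theorem palindrome_flatMap_fibSub_append_zero_iff (p : List (Fin 2)) :
    (p.flatMap fibSub ++ [0]).Palindrome ↔ p.Palindrome :=
  palindrome_flatMap_append_iff (by decide) flatMap_fibSub_injective p

theorem fibList_add_two (m : ℕ) : fibList (m + 2) = fibList (m + 1) ++ fibList m := by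
  induction m with
  | zero => rfl
  | succ m ih =>
    calc fibList (m + 3) = (fibList (m + 1) ++ fibList m).flatMap fibSub := by rw [← ih]; rfl
      _ = fibList (m + 2) ++ fibList (m + 1) := List.flatMap_append

theorem length_fibList (m : ℕ) : (fibList m).length = fibF (m + 2) := by
  induction m using Nat.twoStepInduction with
  | zero => rfl
  | one => rfl
  | more m ih₀ ih₁ => rw [fibList_add_two, List.length_append, ih₀, ih₁]; rfl

theorem lt_fibF_add_two (m : ℕ) : m < fibF (m + 2) := by
  induction m using Nat.twoStepInduction with
  | zero => decide
  | one => decide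
  | more m ih₀ ih₁ =>
    show m + 2 < fibF (m + 1 + 2) + fibF (m + 2)
    omega

theorem fibList_prefix_succ : ∀ m, fibList m <+: fibList (m + 1)
  | 0 => ⟨[1], rfl⟩
  | m + 1 => by rw [fibList_add_two]; exact List.prefix_append _ _

theorem fibList_prefix_of_le {m m' : ℕ} (h : m ≤ m') : fibList m <+: fibList m' := by
  induction h with
  | refl => exact List.prefix_refl _
  | step _ ih => exact ih.trans (fibList_prefix_succ _)

@[simp] theorem length_fibPrefix (n : ℕ) : (fibPrefix n).length = n := by
  simp [fibPrefix]

@[simp] theorem getElem_fibPrefix {n i : ℕ} (h : i < (fibPrefix n).length) :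
    (fibPrefix n)[i] = fibWord i := by
  simp [fibPrefix]

theorem fibPrefix_succ (n : ℕ) : fibPrefix (n + 1) = fibPrefix n ++ [fibWord n] := by
  simp [fibPrefix, List.range_succ]

theorem fibWord_eq_getElem {m i : ℕ} (h : i < (fibList m).length) :
    fibWord i = (fibList m)[i] := by
  have hi : i < (fibList (i + 1)).length := by
    rw [length_fibList]; have := lt_fibF_add_two (i + 1); omega
  rw [fibWord, List.getD_eq_getElem _ _ hi]
  rcases le_total m (i + 1) with hm | hm
  · exact ((fibList_prefix_of_le hm).getElem h).symm
  · exact (fibList_prefix_of_le hm).getElem hi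

theorem eq_fibPrefix_of_prefix {l : List (Fin 2)} {m : ℕ} (h : l <+: fibList m) :
    l = fibPrefix l.length := by
  refine List.ext_getElem (by simp) fun i h₁ _ => ?_
  rw [getElem_fibPrefix, fibWord_eq_getElem (h₁.trans_le h.length_le), h.getElem]

theorem fibPrefix_prefix_fibList (n : ℕ) : fibPrefix n <+: fibList n := by
  have h := List.take_prefix n (fibList n)
  have hn : n ≤ (fibList n).length := by rw [length_fibList]; exact (lt_fibF_add_two n).le
  rwa [eq_fibPrefix_of_prefix h, List.length_take, min_eq_left hn] at h

/-- The position `|σ(F[1,k])|` at which the block `σ(F_k)` of `F = σ(F)` starts. -/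
def fibSubLength (k : ℕ) : ℕ := ((fibPrefix k).flatMap fibSub).length

theorem flatMap_fibPrefix (k : ℕ) :
    (fibPrefix k).flatMap fibSub = fibPrefix (fibSubLength k) :=
  eq_fibPrefix_of_prefix (m := k + 1) ((fibPrefix_prefix_fibList k).flatMap fibSub)

theorem fibPrefix_fibSubLength_succ (k : ℕ) :
    fibPrefix (fibSubLength (k + 1)) = fibPrefix (fibSubLength k) ++ fibSub (fibWord k) := by
  rw [← flatMap_fibPrefix, ← flatMap_fibPrefix, fibPrefix_succ, List.flatMap_append,
    List.flatMap_singleton]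

theorem fibSubLength_succ (k : ℕ) :
    fibSubLength (k + 1) = fibSubLength k + (fibSub (fibWord k)).length := by
  simpa using congrArg List.length (fibPrefix_fibSubLength_succ k)

theorem fibSubLength_zero : fibSubLength 0 = 0 := rfl

theorem fibSubLength_strictMono : StrictMono fibSubLength :=
  strictMono_nat_of_lt_succ fun k => by
    rw [fibSubLength_succ]
    exact Nat.lt_add_of_pos_right (length_fibSub_pos _)

theorem fibWord_fibSubLength_add {k j : ℕ} (hj : j < (fibSub (fibWord k)).length) :
    fibWord (fibSubLength k + j) = (fibSub (fibWord k))[j] := by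
  have hi : fibSubLength k + j < (fibPrefix (fibSubLength (k + 1))).length := by
    rw [length_fibPrefix, fibSubLength_succ]; omega
  rw [← getElem_fibPrefix hi]
  simp [fibPrefix_fibSubLength_succ, List.getElem_append_right]

theorem exists_fibSubLength_le_lt (i : ℕ) :
    ∃ k, fibSubLength k ≤ i ∧ i < fibSubLength (k + 1) := by
  induction i with
  | zero => exact ⟨0, fibSubLength_zero.le, fibSubLength_strictMono (Nat.lt_add_one 0)⟩
  | succ i ih =>
    obtain ⟨k, hle, hlt⟩ := ih
    rcases (Nat.succ_le_of_lt hlt).lt_or_eq with h | h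
    · exact ⟨k, by omega, h⟩
    · have := fibSubLength_strictMono (Nat.lt_add_one (k + 1))
      exact ⟨k + 1, h.ge, by omega⟩

theorem eq_zero_of_getElem_fibSub_eq_zero {x : Fin 2} {j : ℕ} (hj : j < (fibSub x).length)
    (h : (fibSub x)[j] = 0) : j = 0 := by
  rcases j with _ | _ | j
  · rfl
  · fin_cases x <;> simp [fibSub] at hj h
  · fin_cases x <;> simp [fibSub] at hj

theorem fibWord_eq_zero_iff (i : ℕ) : fibWord i = 0 ↔ ∃ k, fibSubLength k = i := by
  constructor
  · intro h
    obtain ⟨k, hle, hlt⟩ := exists_fibSubLength_le_lt i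
    obtain ⟨j, rfl⟩ := Nat.exists_eq_add_of_le hle
    have hj : j < (fibSub (fibWord k)).length := by rw [fibSubLength_succ] at hlt; omega
    rw [fibWord_fibSubLength_add hj] at h
    exact ⟨k, by rw [eq_zero_of_getElem_fibSub_eq_zero hj h, Nat.add_zero]⟩
  · rintro ⟨k, rfl⟩
    simpa using (fibWord_fibSubLength_add (length_fibSub_pos (fibWord k))).trans
      (getElem_fibSub_zero _)

theorem fibPrefix_fibSubLength_add_one (k : ℕ) :
    fibPrefix (fibSubLength k + 1) = (fibPrefix k).flatMap fibSub ++ [0] := by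
  rw [fibPrefix_succ, ← flatMap_fibPrefix, (fibWord_eq_zero_iff _).2 ⟨k, rfl⟩]

theorem fibWord_eq_zero_of_palindrome {n : ℕ} (h : (fibPrefix (n + 1)).Palindrome) :
    fibWord n = 0 := by
  have h' := congrArg List.head? h.reverse_eq
  rw [List.head?_reverse, fibPrefix_succ, List.getLast?_concat, ← fibPrefix_succ] at h'
  have h₀ : fibWord 0 = 0 := rfl
  simpa [fibPrefix, List.range_succ_eq_map, h₀, eq_comm] using h'

theorem fibPrefix_succ_palindrome_iff (n : ℕ) :
    (fibPrefix (n + 1)).Palindrome ↔ ∃ k, fibSubLength k = n ∧ (fibPrefix k).Palindrome := by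
  constructor
  · intro h
    obtain ⟨k, rfl⟩ := (fibWord_eq_zero_iff n).1 (fibWord_eq_zero_of_palindrome h)
    rw [fibPrefix_fibSubLength_add_one, palindrome_flatMap_fibSub_append_zero_iff] at h
    exact ⟨k, rfl, h⟩
  · rintro ⟨k, rfl, h⟩
    rwa [fibPrefix_fibSubLength_add_one, palindrome_flatMap_fibSub_append_zero_iff]

theorem exists_fibList_eq_append_pair {m : ℕ} (hm : 1 ≤ m) :
    ∃ w x y, x ≠ y ∧ fibList m = w ++ [x, y] := by
  induction m using Nat.twoStepInduction with
  | zero => omega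
  | one => exact ⟨[], 0, 1, by decide, rfl⟩
  | more m ih _ =>
    rcases Nat.eq_zero_or_pos m with rfl | hm
    · exact ⟨[0], 1, 0, by decide, rfl⟩
    · obtain ⟨w, x, y, hxy, hw⟩ := ih hm
      exact ⟨fibList (m + 1) ++ w, x, y, hxy, by rw [fibList_add_two, hw, List.append_assoc]⟩

theorem fibSubLength_fibF {m : ℕ} (hm : 1 ≤ m) :
    fibSubLength (fibF (m + 2) - 2) + 3 = fibF (m + 1 + 2) := by
  obtain ⟨w, x, y, hxy, hw⟩ := exists_fibList_eq_append_pair hm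
  have hwlen : w.length = fibF (m + 2) - 2 := by rw [← length_fibList, hw]; simp
  have hpre : fibPrefix w.length = w :=
    (eq_fibPrefix_of_prefix (m := m) (hw ▸ List.prefix_append _ _)).symm
  have hxy3 : ([x, y].flatMap fibSub).length = 3 := by
    fin_cases x <;> fin_cases y <;> simp_all [fibSub]
  rw [← hwlen, fibSubLength, hpre, ← length_fibList (m + 1), fibList, hw, List.flatMap_append,
    List.length_append, hxy3]

def IsCentralLength (n : ℕ) : Prop := ∃ m, 2 ≤ m ∧ n = fibF (m + 2) - 2

theorem isCentralLength_succ_iff {n : ℕ} (hn : 1 ≤ n) :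
    IsCentralLength (n + 1) ↔ ∃ k, fibSubLength k = n ∧ IsCentralLength k := by
  constructor
  · rintro ⟨m, hm, hnm⟩
    obtain ⟨j, rfl⟩ : ∃ j, m = j + 1 := ⟨m - 1, by omega⟩
    have hj : 2 ≤ j := by
      by_contra! hj
      obtain rfl : j = 1 := by omega
      rw [show fibF (1 + 1 + 2) = 3 from rfl] at hnm
      omega
    have := fibSubLength_fibF (m := j) (by omega)
    exact ⟨fibF (j + 2) - 2, by omega, j, hj, rfl⟩
  · rintro ⟨k, rfl, m, hm, rfl⟩
    have := fibSubLength_fibF (m := m) (by omega)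
    exact ⟨m + 1, by omega, by omega⟩

/-- `F[1,n]` is a palindrome iff `n = f_m - 2` for some `m ≥ 2` (with `f_m = fibF (m+2)`). -/
theorem fibPrefix_palindrome_iff (n : ℕ) (hn : 1 ≤ n) :
    (fibPrefix n).Palindrome ↔ ∃ m : ℕ, 2 ≤ m ∧ n = fibF (m + 2) - 2 := by
  change _ ↔ IsCentralLength n
  induction n using Nat.strong_induction_on with
  | _ n ih =>
  obtain ⟨n, rfl⟩ := Nat.exists_eq_add_of_le' hn
  rcases Nat.eq_zero_or_pos n with rfl | hpos
  · exact ⟨fun _ => ⟨2, le_rfl, rfl⟩, fun _ => List.Palindrome.of_reverse_eq rfl⟩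
  rw [fibPrefix_succ_palindrome_iff, isCentralLength_succ_iff hpos]
  refine exists_congr fun k => and_congr_right fun hk => ih k ?_ ?_
  · exact Nat.lt_succ_of_le (hk ▸ fibSubLength_strictMono.le_apply)
  · refine Nat.pos_of_ne_zero fun hk₀ => ?_
    rw [hk₀, fibSubLength_zero] at hk
    omega
end

section
/- Let the kernel numbers be k_0 = 0, k_1 = k_2 = 1, k_m = k_{m−1} + k_{m−2} + k_{m−3} − 1 for m ≥ 3, and let t be the Tribonacci numbers t_{−2}=0, t_{−1}=t_0=1, t_m = t_{m−1}+t_{m−2}+t_{m−3} for m ≥ 1. Then for all m ≥ 3, k_m = k_{m−3} + t_{m−4} and k_m = (t_{m−3} + t_{m−5} + 1)/2. -/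
/-!
Summing the closed form `2 k_j = t_{j-3} + t_{j-5} + 1` over `j = m-1, m-2, m-3` gives
`t_{m-3} + t_{m-5} + 3`, so the `-1` of the kernel recurrence turns it into the closed form for
`k_m`. Subtracting the closed forms for `k_m` and `k_{m-3}` and applying the Tribonacci
recurrence twice leaves `2 t_{m-4}`.
-/

/-- Tribonacci numbers shifted: `trib (m+2) = t_m` where `t_{-2}=0`, `t_{-1}=t_0=1`,
`t_m = t_{m-1} + t_{m-2} + t_{m-3}`. -/
def trib : ℕ → ℕ
  | 0 => 0
  | 1 => 1
  | 2 => 1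
  | n + 3 => trib (n + 2) + trib (n + 1) + trib n

/-- Kernel numbers: `k_0 = 0`, `k_1 = k_2 = 1`, `k_m = k_{m-1}+k_{m-2}+k_{m-3}-1`. -/
def ker : ℕ → ℕ
  | 0 => 0
  | 1 => 1
  | 2 => 1
  | n + 3 => ker (n + 2) + ker (n + 1) + ker n - 1

theorem two_mul_ker_add_three : ∀ n, 2 * ker (n + 3) = trib (n + 2) + trib n + 1
  | 0 | 1 | 2 => rfl
  | n + 3 => by
    have h₀ := two_mul_ker_add_three n
    have h₁ := two_mul_ker_add_three (n + 1)
    have h₂ := two_mul_ker_add_three (n + 2)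
    simp only [ker, trib] at h₀ h₁ h₂ ⊢
    omega

theorem ker_add_three : ∀ n, ker (n + 3) = ker n + trib (n + 1)
  | 0 | 1 | 2 => rfl
  | n + 3 => by
    have h := two_mul_ker_add_three n
    have h' : 2 * ker (n + 6) = trib (n + 5) + trib (n + 3) + 1 := two_mul_ker_add_three (n + 3)
    have t₃ : trib (n + 3) = trib (n + 2) + trib (n + 1) + trib n := rfl
    have t₄ : trib (n + 4) = trib (n + 3) + trib (n + 2) + trib (n + 1) := rfl
    have t₅ : trib (n + 5) = trib (n + 4) + trib (n + 3) + trib (n + 2) := rfl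
    show ker (n + 6) = ker (n + 3) + trib (n + 4)
    omega

/-- For all `m ≥ 3`, `k_m = k_{m-3} + t_{m-4}` and `k_m = (t_{m-3} + t_{m-5} + 1)/2`
(with `t_i = trib (i+2)`). -/
theorem ker_eq (m : ℕ) (hm : 3 ≤ m) :
    ker m = ker (m - 3) + trib (m - 2) ∧
    ker m = (trib (m - 1) + trib (m - 3) + 1) / 2 := by
  obtain ⟨n, rfl⟩ : ∃ n, m = n + 3 := ⟨m - 3, by omega⟩
  show _ ∧ ker (n + 3) = (trib (n + 2) + trib n + 1) / 2
  exact ⟨ker_add_three n, by have := two_mul_ker_add_three n; omega⟩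
end

section
/- With kernel numbers k_0=0, k_1=k_2=1, k_m = k_{m−1}+k_{m−2}+k_{m−3}−1 (m ≥ 3) and Tribonacci numbers t_{−2}=0, t_{−1}=t_0=1, t_m=t_{m−1}+t_{m−2}+t_{m−3} (m ≥ 1), we have ∑_{i=1}^{m} k_i = (k_m + k_{m+2} + m − 1)/2 = (t_{m−2} + t_{m−3} + m)/2 for all m ≥ 1. -/
theorem eq_of_tribonacci_rec {M : Type*} [Add M] {f g : ℕ → M}
    (hf : ∀ n, f (n + 3) = f (n + 2) + f (n + 1) + f n)
    (hg : ∀ n, g (n + 3) = g (n + 2) + g (n + 1) + g n)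
    (h₀ : f 0 = g 0) (h₁ : f 1 = g 1) (h₂ : f 2 = g 2) : f = g := by
  funext n
  induction n using Nat.strong_induction_on with
  | _ n ih =>
    match n with
    | 0 => exact h₀
    | 1 => exact h₁
    | 2 => exact h₂
    | n + 3 => rw [hf, hg, ih n (by omega), ih (n + 1) (by omega), ih (n + 2) (by omega)]

theorem ker_pos : ∀ n, 0 < ker (n + 1)
  | 0 => Nat.one_pos
  | 1 => Nat.one_pos
  | n + 2 => by
    have := ker_pos n
    have : 0 < ker (n + 2) := ker_pos (n + 1)
    simp only [ker]
    omega

theorem ker_add_three_add_one (n : ℕ) :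
    ker (n + 3) + 1 = ker (n + 2) + ker (n + 1) + ker n := by
  have := ker_pos n
  simp only [ker]
  omega

theorem two_mul_sum_Icc_ker_add_one (m : ℕ) :
    2 * ∑ i ∈ Finset.Icc 1 m, ker i + 1 = ker m + ker (m + 2) + m := by
  induction m with
  | zero => rfl
  | succ m ih =>
    rw [Finset.sum_Icc_succ_top (by omega), mul_add, show m + 1 + 2 = m + 3 from rfl]
    have := ker_add_three_add_one m
    omega

theorem ker_add_ker_add_two (m : ℕ) : ker m + ker (m + 2) = trib m + trib (m - 1) + 1 := by
  rcases m with _ | n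
  · rfl
  have key : (fun n ↦ (ker (n + 1) + ker (n + 3) : ℤ) - 1) =
      fun n ↦ (trib (n + 1) + trib n : ℤ) := by
    refine eq_of_tribonacci_rec (fun n ↦ ?_) (fun n ↦ ?_) rfl rfl rfl
    · have h₁ := ker_add_three_add_one (n + 1)
      have h₂ := ker_add_three_add_one (n + 3)
      simp only [add_assoc, Nat.reduceAdd] at h₁ h₂ ⊢
      omega
    · simp only [trib]
      push_cast
      ring
  have := congrFun key n
  rw [show n + 1 + 2 = n + 3 from rfl, Nat.add_sub_cancel]
  omega

theorem sum_ker_eq_general (m : ℕ) :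
    (∑ i ∈ Finset.Icc 1 m, ker i) = (ker m + ker (m + 2) + m - 1) / 2 ∧
    (∑ i ∈ Finset.Icc 1 m, ker i) = (trib m + trib (m - 1) + m) / 2 := by
  have hsum := two_mul_sum_Icc_ker_add_one m
  have htrib := ker_add_ker_add_two m
  omega

/-- For all `m ≥ 1`, `∑_{i=1}^{m} k_i = (k_m + k_{m+2} + m - 1)/2 = (t_{m-2} + t_{m-3} + m)/2`
(with `t_i = trib (i+2)`). -/
theorem sum_ker_eq (m : ℕ) (hm : 1 ≤ m) :
    (∑ i ∈ Finset.Icc 1 m, ker i) = (ker m + ker (m + 2) + m - 1) / 2 ∧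
    (∑ i ∈ Finset.Icc 1 m, ker i) = (trib m + trib (m - 1) + m) / 2 :=
  sum_ker_eq_general m
end

section
/- Define D(m) = ∑_{i=−1}^{m−2} t_i t_{m−i−2} for m ≥ 1, where t are the Tribonacci numbers with t_{−2}=0, t_{−1}=t_0=1. Then D(m) = (m/22)(3t_m + 7t_{m−1} + 2t_{m−2}) + (1/22)(3t_m − 3t_{m−1} + 4t_{m−2}) for all m ≥ 1. -/
/-- `D m = ∑_{i=-1}^{m-2} t_i t_{m-i-2}` (with `t_i = trib (i+2)`). -/
def D (m : ℕ) : ℚ :=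
  ∑ j ∈ Finset.range m, (trib (j + 1) : ℚ) * (trib (m - j + 1) : ℚ)

open Finset

lemma trib_add_three (n : ℕ) : trib (n + 3) = trib (n + 2) + trib (n + 1) + trib n := rfl

lemma trib_add_three_sub {m i : ℕ} (hi : i ≤ m + 1) :
    trib (m + 3 - i) = trib (m + 2 - i) + trib (m + 1 - i) + trib (m - i) := by
  rcases Nat.lt_or_eq_of_le hi with hi | rfl
  · rw [show m + 3 - i = m - i + 3 by omega, show m + 2 - i = m - i + 2 by omega,
      show m + 1 - i = m - i + 1 by omega]
    exact trib_add_three _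
  · simp [trib]

lemma D_eq_sum_range {m N : ℕ} (hN : m ≤ N) :
    D m = ∑ i ∈ range N, (trib (m - i) : ℚ) * trib (i + 2) := by
  have reflect : D m = ∑ i ∈ range m, (trib (m - i) : ℚ) * trib (i + 2) := by
    rw [D, ← sum_range_reflect]
    refine sum_congr rfl fun i hi => ?_
    rw [mem_range] at hi
    rw [show m - 1 - i + 1 = m - i by omega, show m - (m - 1 - i) + 1 = i + 2 by omega]
  rw [reflect]
  refine sum_subset (range_subset_range.mpr hN) fun i _ hi => ?_
  rw [mem_range, not_lt, ← Nat.sub_eq_zero_iff_le] at hi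
  simp [hi, trib]

lemma D_add_three (m : ℕ) : D (m + 3) = D (m + 2) + D (m + 1) + D m + trib (m + 4) := by
  have split : D (m + 3) = ∑ i ∈ range (m + 2), ((trib (m + 2 - i) : ℚ) * trib (i + 2)
      + (trib (m + 1 - i) : ℚ) * trib (i + 2) + (trib (m - i) : ℚ) * trib (i + 2))
      + trib (m + 4) := by
    rw [D_eq_sum_range le_rfl, sum_range_succ, show m + 3 - (m + 2) = 1 by omega]
    congr 1
    · refine sum_congr rfl fun i hi => ?_
      rw [trib_add_three_sub (Nat.le_of_lt_succ (mem_range.mp hi))]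
      push_cast
      ring
    · simp [trib]
  rw [split, sum_add_distrib, sum_add_distrib, ← D_eq_sum_range le_rfl,
    ← D_eq_sum_range (by omega), ← D_eq_sum_range (by omega)]

theorem D_closed_form_general (m : ℕ) :
    D m = ((m : ℚ) / 22) *
        (3 * (trib (m + 2) : ℚ) + 7 * (trib (m + 1) : ℚ) + 2 * (trib m : ℚ)) +
      (1 / 22) *
        (3 * (trib (m + 2) : ℚ) - 3 * (trib (m + 1) : ℚ) + 4 * (trib m : ℚ)) := by
  induction m using Nat.strong_induction_on with
  | _ m ih =>
    match m with
    | 0 | 1 | 2 => norm_num [D, sum_range_succ, trib]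
    | k + 3 =>
      rw [D_add_three, ih (k + 2) (by omega), ih (k + 1) (by omega), ih k (by omega),
        trib_add_three (k + 2), trib_add_three (k + 1), trib_add_three k]
      push_cast
      ring

/-- For all `m ≥ 1`,
`D m = (m/22)(3 t_m + 7 t_{m-1} + 2 t_{m-2}) + (1/22)(3 t_m - 3 t_{m-1} + 4 t_{m-2})`. -/
theorem D_closed_form (m : ℕ) (hm : 1 ≤ m) :
    D m = ((m : ℚ) / 22) *
        (3 * (trib (m + 2) : ℚ) + 7 * (trib (m + 1) : ℚ) + 2 * (trib m : ℚ)) +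
      (1 / 22) *
        (3 * (trib (m + 2) : ℚ) - 3 * (trib (m + 1) : ℚ) + 4 * (trib m : ℚ)) :=
  D_closed_form_general m
end

section
/- For Tribonacci numbers t with t_{−2}=0, t_{−1}=t_0=1, ∑_{i=0}^{m} (i+1) t_i = (m/2)(t_{m+2} + t_m) − (1/2)(t_{m−1} + t_{m−2}) + 3/2 for all m ≥ 0. -/
theorem two_mul_sum_weighted_of_tribonacci_recurrence {R : Type*} [CommRing R] (t : ℕ → R)
    (ht : ∀ n, t (n + 3) = t (n + 2) + t (n + 1) + t n) (m : ℕ) :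
    2 * ∑ i ∈ Finset.range (m + 1), ((i : R) + 1) * t (i + 2) =
      m * (t (m + 4) + t (m + 2)) - (t (m + 1) + t m) + 2 * t 2 + t 1 + t 0 := by
  induction m with
  | zero => simp only [zero_add, Finset.sum_range_one, Nat.cast_zero]; ring
  | succ n ih =>
    rw [Finset.sum_range_succ, mul_add, ih, ht (n + 2), ht (n + 1), ht n]
    push_cast
    ring

/-- For all `m ≥ 0`,
`∑_{i=0}^{m} (i+1) t_i = (m/2)(t_{m+2} + t_m) - (1/2)(t_{m-1} + t_{m-2}) + 3/2`
(with `t_i = trib (i+2)`). -/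
theorem sum_weighted_trib (m : ℕ) :
    (∑ i ∈ Finset.range (m + 1), ((i : ℚ) + 1) * (trib (i + 2) : ℚ)) =
      ((m : ℚ) / 2) * ((trib (m + 4) : ℚ) + (trib (m + 2) : ℚ)) -
        (1 / 2) * ((trib (m + 1) : ℚ) + (trib m : ℚ)) + 3 / 2 := by
  have h := two_mul_sum_weighted_of_tribonacci_recurrence (fun n ↦ (trib n : ℚ))
    (fun n ↦ by simp [trib]) m
  simp only [trib.eq_1, trib.eq_2, trib.eq_3, Nat.cast_zero, Nat.cast_one] at h
  linarith
end
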